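/- arXiv:1503.03218 — 2 statements merged into one kernel-verified Lean document; each statement's English description precedes it below -/
import Mathlib

section
/- Let N ≥ 2 and g : ℝ → ℝ with |g(s)| ≤ L₀|s| for all s and some L₀ > 0. Suppose (μₙ, yₙ) are solutions of -(r^{N-1} yₙ')' = μₙ r^{N-1} g(yₙ) on (0,1) with yₙ'(0) = yₙ'(1) = 0 and |μₙ| ≤ μ̂. If ‖yₙ'‖_∞ → ∞, then ‖yₙ‖_∞ → ∞. -/
/-!
The flux `H(r) = r^(N-1) y'(r)` vanishes at `0` (as `N ≥ 2`), and by the equation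
`|H'(s)| ≤ μ̂ L₀ ‖y‖_∞ s^(N-1)`. The mean value theorem on `[0, r]` then gives
`|y'(r)| ≤ μ̂ L₀ ‖y‖_∞ r`, so `‖y'‖_∞ ≤ μ̂ L₀ ‖y‖_∞` uniformly in `n`, and a blow-up
of `‖yₙ'‖_∞` forces one of `‖yₙ‖_∞`.
-/

open Filter Topology Set

theorem abs_le_sSup_abs_image {f : ℝ → ℝ} {s : Set ℝ} (hs : IsCompact s)
    (hf : ContinuousOn f s) {x : ℝ} (hx : x ∈ s) :
    |f x| ≤ sSup ((fun r => |f r|) '' s) :=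
  le_csSup (hs.image_of_continuousOn hf.abs).bddAbove ⟨x, hx, rfl⟩

theorem abs_deriv_le_of_abs_deriv_pow_mul_deriv_le {y : ℝ → ℝ} {k : ℕ} (hk : k ≠ 0) {K : ℝ}
    (hy₁ : ContDiffOn ℝ 1 y (Icc 0 1)) (hy₂ : DifferentiableOn ℝ (deriv y) (Ioo 0 1))
    (hK : ∀ s ∈ Ioo (0:ℝ) 1, |deriv (fun s => s ^ k * deriv y s) s| ≤ K * s ^ k)
    {r : ℝ} (hr : r ∈ Ioo (0:ℝ) 1) : |deriv y r| ≤ K * r := by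
  set H : ℝ → ℝ := fun s => s ^ k * deriv y s
  -- `deriv y 0` may be a junk value; the one-sided derivative extends `H` continuously by `0`.
  set F : ℝ → ℝ := fun s => s ^ k * derivWithin y (Icc 0 1) s
  have hFH : ∀ s ∈ Ioo (0:ℝ) 1, F =ᶠ[𝓝 s] H := fun s hs => by
    filter_upwards [isOpen_Ioo.mem_nhds hs] with t ht
    simp only [F, H, derivWithin_of_mem_nhds (Icc_mem_nhds ht.1 ht.2)]
  have hFc : ContinuousOn F (Icc 0 r) :=
    ((continuous_pow k).continuousOn.mul
      (hy₁.continuousOn_derivWithin (uniqueDiffOn_Icc one_pos) le_rfl)).mono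
      (Icc_subset_Icc_right hr.2.le)
  have hF' : ∀ s ∈ Ioo 0 r, HasDerivAt F (deriv H s) s := fun s hs => by
    have hs₁ : s ∈ Ioo (0:ℝ) 1 := ⟨hs.1, hs.2.trans hr.2⟩
    have hH : DifferentiableAt ℝ H s :=
      (differentiableAt_pow k).mul ((hy₂ s hs₁).differentiableAt (isOpen_Ioo.mem_nhds hs₁))
    exact hH.hasDerivAt.congr_of_eventuallyEq (hFH s hs₁)
  obtain ⟨c, hc, hslope⟩ := exists_hasDerivAt_eq_slope F (deriv H) hr.1 hFc hF'
  have hc₁ : c ∈ Ioo (0:ℝ) 1 := ⟨hc.1, hc.2.trans hr.2⟩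
  have hF₀ : F 0 = 0 := by simp [F, hk]
  have hFr : F r = r ^ k * deriv y r := (hFH r hr).eq_of_nhds
  have hK₀ : 0 ≤ K :=
    nonneg_of_mul_nonneg_left ((abs_nonneg _).trans (hK c hc₁)) (pow_pos hc.1 k)
  have hrk : 0 < r ^ k := pow_pos hr.1 k
  refine le_of_mul_le_mul_left ?_ hrk
  calc r ^ k * |deriv y r| = |deriv H c| * r := by
        rw [hslope, hF₀, hFr, sub_zero, sub_zero, abs_div, abs_of_pos hr.1, abs_mul,
          abs_of_pos hrk, div_mul_cancel₀ _ hr.1.ne']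
    _ ≤ K * c ^ k * r := by gcongr; exacts [hr.1.le, hK c hc₁]
    _ ≤ K * r ^ k * r := by gcongr; exacts [hr.1.le, hc.1.le, hc.2.le]
    _ = r ^ k * (K * r) := by ring

theorem sSup_abs_deriv_le {y : ℝ → ℝ} {k : ℕ} (hk : k ≠ 0) {K : ℝ} (hK₀ : 0 ≤ K)
    (hy₁ : ContDiffOn ℝ 1 y (Icc 0 1)) (hy₂ : DifferentiableOn ℝ (deriv y) (Ioo 0 1))
    (hbc : deriv y 0 = 0 ∧ deriv y 1 = 0)
    (hK : ∀ s ∈ Ioo (0:ℝ) 1, |deriv (fun s => s ^ k * deriv y s) s| ≤ K * s ^ k) :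
    sSup ((fun r => |deriv y r|) '' Icc (0:ℝ) 1) ≤ K := by
  refine Real.sSup_le ?_ hK₀
  rintro _ ⟨r, ⟨hr₀, hr₁⟩, rfl⟩
  rcases hr₀.eq_or_lt with rfl | hr₀
  · simpa [hbc.1] using hK₀
  rcases hr₁.eq_or_lt with rfl | hr₁
  · simpa [hbc.2] using hK₀
  calc |deriv y r| ≤ K * r := abs_deriv_le_of_abs_deriv_pow_mul_deriv_le hk hy₁ hy₂ hK ⟨hr₀, hr₁⟩
    _ ≤ K := mul_le_of_le_one_right hK₀ hr₁.le

theorem abs_deriv_pow_mul_deriv_le_of_ode {k : ℕ} {g y : ℝ → ℝ} {L₀ μ μhat M : ℝ}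
    (hg : ∀ s, |g s| ≤ L₀ * |s|) (hL₀ : 0 ≤ L₀) (hμ : |μ| ≤ μhat)
    (hM : ∀ s ∈ Ioo (0:ℝ) 1, |y s| ≤ M)
    (hode : ∀ r ∈ Ioo (0:ℝ) 1, -(deriv (fun s => s ^ k * deriv y s) r) = μ * r ^ k * g (y r)) :
    ∀ s ∈ Ioo (0:ℝ) 1, |deriv (fun s => s ^ k * deriv y s) s| ≤ μhat * L₀ * M * s ^ k := by
  intro s hs
  have hgy : |g (y s)| ≤ L₀ * M := (hg _).trans (mul_le_mul_of_nonneg_left (hM s hs) hL₀)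
  have hμhat : 0 ≤ μhat := (abs_nonneg _).trans hμ
  rw [← abs_neg, hode s hs, abs_mul, abs_mul, abs_pow, abs_of_pos hs.1]
  have hsk : 0 ≤ s ^ k := pow_nonneg hs.1.le k
  calc |μ| * s ^ k * |g (y s)| ≤ μhat * s ^ k * (L₀ * M) := by gcongr
    _ = μhat * L₀ * M * s ^ k := by ring

/-- If the sup norms of `yₙ'` blow up then so do the sup norms of
`yₙ`. -/
theorem stmt_7 (N : ℕ) (hN : 2 ≤ N) (g : ℝ → ℝ) (L₀ : ℝ) (hL₀ : 0 < L₀)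
    (hg : ∀ s : ℝ, |g s| ≤ L₀ * |s|)
    (μhat : ℝ) (μ : ℕ → ℝ) (hμ : ∀ n, |μ n| ≤ μhat)
    (y : ℕ → ℝ → ℝ)
    (hy_reg : ∀ n, ContDiffOn ℝ 1 (y n) (Set.Icc 0 1) ∧
      ContDiffOn ℝ 2 (y n) (Set.Ioc 0 1))
    (hbc : ∀ n, deriv (y n) 0 = 0 ∧ deriv (y n) 1 = 0)
    (hode : ∀ n, ∀ r ∈ Set.Ioo (0:ℝ) 1,
      -(deriv (fun s => s ^ (N - 1) * deriv (y n) s) r)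
        = μ n * r ^ (N - 1) * g (y n r))
    (hblow : Tendsto (fun n => sSup ((fun r => |deriv (y n) r|) '' Set.Icc (0:ℝ) 1))
      atTop atTop) :
    Tendsto (fun n => sSup ((fun r => |y n r|) '' Set.Icc (0:ℝ) 1)) atTop atTop := by
  have hk : N - 1 ≠ 0 := by omega
  have hμhat : 0 ≤ μhat := (abs_nonneg _).trans (hμ 0)
  set M := fun n => sSup ((fun r => |y n r|) '' Icc (0:ℝ) 1)
  have hM : ∀ n, ∀ r ∈ Icc (0:ℝ) 1, |y n r| ≤ M n := fun n r hr =>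
    abs_le_sSup_abs_image isCompact_Icc (hy_reg n).1.continuousOn hr
  have hM₀ : ∀ n, 0 ≤ M n := fun n => (abs_nonneg _).trans (hM n 0 ⟨le_rfl, zero_le_one⟩)
  have hbound : ∀ n, sSup ((fun r => |deriv (y n) r|) '' Icc (0:ℝ) 1) ≤ μhat * L₀ * M n :=
    fun n => sSup_abs_deriv_le hk (by have := hM₀ n; positivity) (hy_reg n).1
      (((hy_reg n).2.mono Ioo_subset_Ioc_self).deriv_of_isOpen isOpen_Ioo
        (by norm_num)).differentiableOn_one
      (hbc n) (abs_deriv_pow_mul_deriv_le_of_ode hg hL₀.le (hμ n)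
        (fun s hs => hM n s (Ioo_subset_Icc_self hs)) (hode n))
  refine Tendsto.atTop_of_const_mul₀ (c := μhat * L₀ + 1) (by positivity) ?_
  refine tendsto_atTop_mono (fun n => (hbound n).trans ?_) hblow
  have := hM₀ n
  nlinarith
end

section
/- Let N ≥ 2, g : ℝ → ℝ with |g(s)| ≤ L₀|s|, |μ| ≤ μ̂, and let y ∈ C¹[0,1] ∩ C²(0,1] satisfy -(r^{N-1} y')' = μ r^{N-1} g(y) on (0,1] with y'(0) = 0. Then ‖y'‖_∞ ≤ μ̂ L₀ ‖y‖_∞, where ‖·‖_∞ is the sup norm on [0,1]. -/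
/-!
The flux `F(r) = r^(N-1) y'(r)` vanishes at `0` and, by the equation, has derivative
`-μ r^(N-1) g(y(r))` on `(0, 1)`. By the mean value theorem `F(r) = -r μ c^(N-1) g(y(c))` for some
`c ∈ (0, r)`, and `c^(N-1) ≤ r^(N-1)`, so `|y'(r)| ≤ r μ̂ L₀ ‖y‖_∞ ≤ μ̂ L₀ ‖y‖_∞`.
-/

open Set Topology

theorem abs_le_mul_of_hasDerivAt_pow_mul {k : ℕ} (hk : k ≠ 0) {u f : ℝ → ℝ} {C r : ℝ}
    (hr : 0 < r) (hu : ContinuousOn u (Icc 0 r))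
    (hderiv : ∀ t ∈ Ioo 0 r, HasDerivAt (fun s => s ^ k * u s) (t ^ k * f t) t)
    (hf : ∀ t ∈ Ioo 0 r, |f t| ≤ C) :
    |u r| ≤ C * r := by
  obtain ⟨c, hc, hslope⟩ := exists_hasDerivAt_eq_slope (fun s => s ^ k * u s) _ hr
    ((continuousOn_pow k).mul hu) hderiv
  rw [zero_pow hk, zero_mul, sub_zero, sub_zero, eq_div_iff hr.ne'] at hslope
  have hck : c ^ k ≤ r ^ k := pow_le_pow_left₀ hc.1.le hc.2.le k
  have hrk : 0 < r ^ k := pow_pos hr k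
  have hflux : r ^ k * |u r| ≤ r ^ k * (C * r) :=
    calc r ^ k * |u r| = c ^ k * |f c| * r := by
          rw [← abs_of_pos hrk, ← abs_mul, ← hslope, abs_mul, abs_mul, abs_of_pos hr,
            abs_of_nonneg (pow_nonneg hc.1.le k)]
      _ ≤ r ^ k * C * r := by gcongr; exact hf c hc
      _ = r ^ k * (C * r) := by ring
  exact le_of_mul_le_mul_left hflux hrk

theorem abs_deriv_le_of_abs_derivWithin_le {y : ℝ → ℝ} {s : Set ℝ} {r C : ℝ}
    (hs : UniqueDiffWithinAt ℝ s r) (hC : 0 ≤ C) (h : |derivWithin y s r| ≤ C) :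
    |deriv y r| ≤ C := by
  by_cases hy : DifferentiableAt ℝ y r
  · rwa [← hy.derivWithin hs]
  · rwa [deriv_zero_of_not_differentiableAt hy, abs_zero]

theorem abs_le_sSup_abs_image_Icc {y : ℝ → ℝ} {a b t : ℝ} (hy : ContinuousOn y (Icc a b))
    (ht : t ∈ Icc a b) : |y t| ≤ sSup ((fun s => |y s|) '' Icc a b) :=
  le_csSup (isCompact_Icc.bddAbove_image hy.abs) ⟨t, ht, rfl⟩

theorem hasDerivAt_pow_mul_derivWithin_of_ode {k : ℕ} {μ : ℝ} {g y : ℝ → ℝ}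
    (hy : ContDiffOn ℝ 2 y (Ioc 0 1))
    (hode : ∀ r ∈ Ioc (0:ℝ) 1,
      -(deriv (fun s => s ^ k * deriv y s) r) = μ * r ^ k * g (y r))
    {t : ℝ} (ht : t ∈ Ioo 0 1) :
    HasDerivAt (fun s => s ^ k * derivWithin y (Icc 0 1) s) (t ^ k * -(μ * g (y t))) t := by
  have hy' : DifferentiableAt ℝ (deriv y) t :=
    ((hy.contDiffAt (Ioc_mem_nhds ht.1 ht.2)).derivWithin (m := 1) (by norm_num)).differentiableAt
      one_ne_zero
  have h : HasDerivAt (fun s => s ^ k * deriv y s) (deriv (fun s => s ^ k * deriv y s) t) t :=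
    ((differentiableAt_pow k).mul hy').hasDerivAt
  rw [← neg_neg (deriv _ t), hode t (Ioo_subset_Ioc_self ht)] at h
  have hd : (fun s => s ^ k * derivWithin y (Icc 0 1) s) =ᶠ[𝓝 t] fun s => s ^ k * deriv y s := by
    filter_upwards [Ioo_mem_nhds ht.1 ht.2] with s hs
    rw [derivWithin_of_mem_nhds (Icc_mem_nhds hs.1 hs.2)]
  exact (h.congr_of_eventuallyEq hd).congr_deriv (by ring)

theorem stmt_8_general (N : ℕ) (hN : 2 ≤ N) (g : ℝ → ℝ) (L₀ : ℝ)
    (hg : ∀ s : ℝ, |g s| ≤ L₀ * |s|)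
    (μ μhat : ℝ) (hμ : |μ| ≤ μhat)
    (y : ℝ → ℝ)
    (hy_reg : ContDiffOn ℝ 1 y (Set.Icc 0 1) ∧ ContDiffOn ℝ 2 y (Set.Ioc 0 1))
    (hbc : deriv y 0 = 0)
    (hode : ∀ r ∈ Set.Ioc (0:ℝ) 1,
      -(deriv (fun s => s ^ (N - 1) * deriv y s) r) = μ * r ^ (N - 1) * g (y r)) :
    ∀ r ∈ Set.Icc (0:ℝ) 1,
      |deriv y r| ≤ μhat * L₀ * sSup ((fun s => |y s|) '' Set.Icc (0:ℝ) 1) := by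
  intro r hr
  obtain ⟨hy1, hy2⟩ := hy_reg
  set M := sSup ((fun s => |y s|) '' Icc (0:ℝ) 1)
  have hM : ∀ t ∈ Icc (0:ℝ) 1, |y t| ≤ M := fun t ht =>
    abs_le_sSup_abs_image_Icc hy1.continuousOn ht
  have hL₀ : 0 ≤ L₀ := by simpa using (abs_nonneg (g 1)).trans (hg 1)
  have hμhat : 0 ≤ μhat := (abs_nonneg μ).trans hμ
  have hM0 : 0 ≤ M := (abs_nonneg _).trans (hM 0 (left_mem_Icc.2 zero_le_one))
  have hC : 0 ≤ μhat * L₀ * M := by positivity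
  rcases hr.1.eq_or_lt with rfl | hr0
  · rwa [hbc, abs_zero]
  have hrhs : ∀ t ∈ Ioo 0 r, |-(μ * g (y t))| ≤ μhat * L₀ * M := fun t ht => by
    have hgy : |g (y t)| ≤ L₀ * M :=
      (hg _).trans (mul_le_mul_of_nonneg_left (hM t ⟨ht.1.le, ht.2.le.trans hr.2⟩) hL₀)
    rw [abs_neg, abs_mul, mul_assoc]
    exact mul_le_mul hμ hgy (abs_nonneg _) hμhat
  have hdy : ContinuousOn (derivWithin y (Icc 0 1)) (Icc 0 r) :=
    (hy1.continuousOn_derivWithin (uniqueDiffOn_Icc zero_lt_one) le_rfl).mono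
      (Icc_subset_Icc le_rfl hr.2)
  refine abs_deriv_le_of_abs_derivWithin_le (uniqueDiffOn_Icc zero_lt_one r hr) hC ?_
  calc |derivWithin y (Icc 0 1) r| ≤ μhat * L₀ * M * r :=
        abs_le_mul_of_hasDerivAt_pow_mul (by omega) hr0 hdy
          (fun t ht => hasDerivAt_pow_mul_derivWithin_of_ode hy2 hode ⟨ht.1, ht.2.trans_le hr.2⟩)
          hrhs
    _ ≤ μhat * L₀ * M := mul_le_of_le_one_right hC hr.2

/-- A priori bound `‖y'‖_∞ ≤ μ̂ L₀ ‖y‖_∞` for solutions of the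
self-adjoint equation with Neumann condition at `0`. -/
theorem stmt_8 (N : ℕ) (hN : 2 ≤ N) (g : ℝ → ℝ) (L₀ : ℝ) (hL₀ : 0 < L₀)
    (hg : ∀ s : ℝ, |g s| ≤ L₀ * |s|)
    (μ μhat : ℝ) (hμ : |μ| ≤ μhat)
    (y : ℝ → ℝ)
    (hy_reg : ContDiffOn ℝ 1 y (Set.Icc 0 1) ∧ ContDiffOn ℝ 2 y (Set.Ioc 0 1))
    (hbc : deriv y 0 = 0)
    (hode : ∀ r ∈ Set.Ioc (0:ℝ) 1,
      -(deriv (fun s => s ^ (N - 1) * deriv y s) r) = μ * r ^ (N - 1) * g (y r)) :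
    ∀ r ∈ Set.Icc (0:ℝ) 1,
      |deriv y r| ≤ μhat * L₀ * sSup ((fun s => |y s|) '' Set.Icc (0:ℝ) 1) :=
  stmt_8_general N hN g L₀ hg μ μhat hμ y hy_reg hbc hode
end
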